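/- arXiv:2412.11368 — 4 statements merged into one kernel-verified Lean document; each statement's English description precedes it below -/
import Mathlib

section
/- Generalized triangle inequality: for positive integers k₁, k₂, sets W ⊆ G^{k₁}, Y ⊆ G^{k₂}, and X, Z ⊆ G, one has |W × X| · |Y − Δ_{k₂}(Z)| ≤ |W × Y × Z − Δ_{k₁+k₂+1}(X)|. -/
open Finset Pointwise

/-!
Fix for every `d ∈ Y - g(Z)` a representation `d = y_d - g z_d` with `y_d ∈ Y`, `z_d ∈ Z`.
Then `(w, x, d) ↦ (w, y_d, z_d) - (f x, g x, x)` maps `W × X × (Y - g(Z))` into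
`W × Y × Z - {(f x, g x, x)}` injectively, because `g` is additive: the last two coordinates
`(y_d - g x, z_d - x)` give back `d = (y_d - g x) - g (z_d - x)`, then the third gives `x`,
and the first `w`. The theorem is the case `f`, `g` the diagonal embeddings.
-/

theorem card_mul_card_sub_image_le_card_prod_sub_image {A B G : Type*}
    [AddGroup A] [AddGroup B] [AddGroup G] [DecidableEq A] [DecidableEq B] [DecidableEq G]
    (f : G → A) (g : G →+ B) (W : Finset A) (Y : Finset B) (X Z : Finset G) :
    #W * #X * #(Y - Z.image g) ≤ #(W ×ˢ Y ×ˢ Z - X.image fun x => (f x, g x, x)) := by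
  have hrep : ∀ d ∈ Y - Z.image g, ∃ p ∈ Y ×ˢ Z, p.1 - g p.2 = d := by
    simp only [mem_sub, mem_image]
    rintro d ⟨y, hy, _, ⟨z, hz, rfl⟩, rfl⟩
    exact ⟨(y, z), mk_mem_product hy hz, rfl⟩
  choose! rep hrep_mem hrep_sub using hrep
  have hrecover : ∀ (p : B × G) (x : G), (p.1 - g x) - g (p.2 - x) = p.1 - g p.2 := by
    intro p x
    rw [map_sub, sub_sub_sub_cancel_right]
  rw [mul_assoc, ← card_product, ← card_product]
  refine card_le_card_of_injOn (fun t => (t.1, rep t.2.2) - (f t.2.1, g t.2.1, t.2.1)) ?_ ?_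
  · rintro ⟨w, x, d⟩ ht
    simp only [coe_product, Set.mem_prod, mem_coe] at ht
    exact sub_mem_sub (mk_mem_product ht.1 (hrep_mem d ht.2.2)) (mem_image_of_mem _ ht.2.1)
  · rintro ⟨w₁, x₁, d₁⟩ ht₁ ⟨w₂, x₂, d₂⟩ ht₂ heq
    simp only [coe_product, Set.mem_prod, mem_coe] at ht₁ ht₂
    simp only [Prod.ext_iff, Prod.fst_sub, Prod.snd_sub] at heq
    obtain ⟨hw, hy, hz⟩ := heq
    obtain rfl : d₁ = d₂ := by
      rw [← hrep_sub d₁ ht₁.2.2, ← hrep_sub d₂ ht₂.2.2, ← hrecover _ x₁, ← hrecover _ x₂, hy, hz]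
    obtain rfl : x₁ = x₂ := sub_right_injective hz
    obtain rfl : w₁ = w₂ := sub_left_injective hw
    rfl

theorem generalized_triangle_general {G : Type*} [AddCommGroup G] [DecidableEq G]
    (k₁ k₂ : ℕ)
    (W : Finset (Fin k₁ → G)) (Y : Finset (Fin k₂ → G)) (X Z : Finset G) :
    W.card * X.card * (Y - Z.image fun z => (fun _ => z : Fin k₂ → G)).card ≤
      ((W ×ˢ Y ×ˢ Z) -
        X.image fun x => ((fun _ => x : Fin k₁ → G), (fun _ => x : Fin k₂ → G), x)).card :=
  card_mul_card_sub_image_le_card_prod_sub_image (fun x _ => x) (Pi.constAddMonoidHom _ G) W Y X Z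

/-- Generalized triangle inequality:
`|W × X| · |Y − Δ_{k₂}(Z)| ≤ |W × Y × Z − Δ_{k₁+k₂+1}(X)|`. -/
theorem generalized_triangle {G : Type*} [AddCommGroup G] [Fintype G] [DecidableEq G]
    (k₁ k₂ : ℕ) (hk₁ : 0 < k₁) (hk₂ : 0 < k₂)
    (W : Finset (Fin k₁ → G)) (Y : Finset (Fin k₂ → G)) (X Z : Finset G) :
    W.card * X.card * (Y - Z.image fun z => (fun _ => z : Fin k₂ → G)).card ≤
      ((W ×ˢ Y ×ˢ Z) -
        X.image fun x => ((fun _ => x : Fin k₁ → G), (fun _ => x : Fin k₂ → G), x)).card :=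
  generalized_triangle_general k₁ k₂ W Y X Z
end

section
/- For any finite sets A, B ⊆ G with |A−A| = K|A| and any integer k ≥ 2, one has E_k(B) · E(A, A+B)^k ≥ |A|^{2k+1} |B|^{2k} / K. -/
/-!
Write `r_X(d)` for the number of pairs `(a, b) ∈ X × X` with `a - b = d`, and `S = A + B`.
For `y ∈ A - A` the set `A_y = A ∩ (y + A)` has `r_A(y)` elements, and by Katz–Koester
`A_y + B ⊆ S ∩ (y + S)`, a set of size `r_S(y)`. Cauchy–Schwarz bounds `|A_y|² |B|²` by
`r_S(y) E(A_y, B)`, and Hölder, with `∑ r_{A_y} = |A_y|²` and `r_{A_y} ≤ |A_y|`, bounds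
`E(A_y, B)^k` by `|A_y|^{2k-1} E_k(B)`; together `r_A(y) |B|^{2k} ≤ E_k(B) r_S(y)^k`.
A second Hölder over `y ∈ A - A`, with `∑ r_A = |A|²` and `∑ r_A r_S = E(A, S)`, turns this into
`|A|^{2k+2} |B|^{2k} ≤ |A - A| E_k(B) E(A, S)^k`.
-/

open Finset Pointwise

lemma inner_pow_le_weight_pow_mul_Lp {ι : Type*} (s : Finset ι) {w f : ι → ℝ}
    (hw : ∀ i ∈ s, 0 ≤ w i) (hf : ∀ i ∈ s, 0 ≤ f i) (n : ℕ) :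
    (∑ i ∈ s, w i * f i) ^ (n + 1) ≤ (∑ i ∈ s, w i) ^ n * ∑ i ∈ s, w i * f i ^ (n + 1) := by
  set W := ∑ i ∈ s, w i
  obtain hW | hW := (sum_nonneg hw).eq_or_lt
  · have hw₀ : ∀ g : ι → ℝ, ∑ i ∈ s, w i * g i = 0 := fun g => sum_eq_zero fun i hi => by
      rw [(sum_eq_zero_iff_of_nonneg hw).1 hW.symm i hi, zero_mul]
    rw [hw₀, hw₀, zero_pow n.succ_ne_zero, mul_zero]
  have := Real.pow_arith_mean_le_arith_mean_pow s (fun i => w i / W) f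
    (fun i hi => div_nonneg (hw i hi) hW.le) (by rw [← sum_div, div_self hW.ne']) hf (n + 1)
  simp only [div_mul_eq_mul_div, ← sum_div, div_pow] at this
  rw [div_le_div_iff₀ (by positivity) hW, pow_succ W] at this
  exact le_of_mul_le_mul_right (by linarith) hW

lemma mul_pow_sum_le_card_mul_pow_sum {ι : Type*} {s : Finset ι} {u a : ι → ℝ}
    {c C : ℝ} {n : ℕ} (hn : n ≠ 0) (hc : 0 ≤ c) (hC : 0 ≤ C) (hu : ∀ i ∈ s, 0 ≤ u i)
    (ha : ∀ i ∈ s, 0 ≤ a i) (h : ∀ i ∈ s, c * u i ^ (n + 1) ≤ C * a i ^ n) :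
    c * (∑ i ∈ s, u i) ^ (n + 1) ≤ #s * C * (∑ i ∈ s, a i) ^ n := by
  obtain rfl | hc := hc.eq_or_lt
  · rw [zero_mul]; exact mul_nonneg (by positivity) (pow_nonneg (sum_nonneg ha) n)
  have hu₀ : ∀ i ∈ s, a i = 0 → u i = 0 := fun i hi ha₀ => by
    have := h i hi
    rw [ha₀, zero_pow hn, mul_zero] at this
    exact pow_eq_zero_iff n.succ_ne_zero |>.1 <|
      le_antisymm (nonpos_of_mul_nonpos_right this hc) (pow_nonneg (hu i hi) _)
  -- Hölder, as Jensen for the weights `a i` and the values `u i / a i`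
  have hsum : ∑ i ∈ s, u i = ∑ i ∈ s, a i * (u i / a i) := sum_congr rfl fun i hi => by
    obtain ha₀ | ha₀ := eq_or_ne (a i) 0
    · simp [ha₀, hu₀ i hi ha₀]
    · rw [mul_div_cancel₀ _ ha₀]
  have hterm : ∀ i ∈ s, c * (a i * (u i / a i) ^ (n + 1)) ≤ C := fun i hi => by
    obtain ha₀ | ha₀ := eq_or_ne (a i) 0
    · simpa [ha₀] using hC
    have : a i * (u i / a i) ^ (n + 1) = u i ^ (n + 1) / a i ^ n := by
      rw [div_pow, pow_succ' (a i), div_mul_eq_div_div, mul_div_assoc', mul_div_cancel₀ _ ha₀]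
    rw [this, mul_div_assoc', div_le_iff₀ (pow_pos ((ha i hi).lt_of_ne' ha₀) n)]
    exact h i hi
  calc c * (∑ i ∈ s, u i) ^ (n + 1)
      ≤ c * ((∑ i ∈ s, a i) ^ n * ∑ i ∈ s, a i * (u i / a i) ^ (n + 1)) := by
        rw [hsum]
        gcongr
        exact inner_pow_le_weight_pow_mul_Lp s ha (fun i hi => div_nonneg (hu i hi) (ha i hi)) n
    _ = (∑ i ∈ s, a i) ^ n * ∑ i ∈ s, c * (a i * (u i / a i) ^ (n + 1)) := by
        rw [mul_left_comm, mul_sum]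
    _ ≤ (∑ i ∈ s, a i) ^ n * ∑ i ∈ s, C := by
        gcongr with i hi
        · exact pow_nonneg (sum_nonneg ha) n
        · exact hterm i hi
    _ = #s * C * (∑ i ∈ s, a i) ^ n := by rw [sum_const, nsmul_eq_mul]; ring

namespace Finset

variable {G : Type*} [AddCommGroup G] [DecidableEq G]

/-- `E_k(s)`; here `s.addConvolution (-s) d` counts the pairs `(a, b) ∈ s × s` with `a - b = d`. -/
def higherAddEnergy (k : ℕ) (s : Finset G) : ℕ :=
  ∑ d ∈ s - s, s.addConvolution (-s) d ^ k

lemma sum_addConvolution_neg_self (s : Finset G) :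
    ∑ d ∈ s - s, s.addConvolution (-s) d = #s ^ 2 := by
  rw [sq, ← card_product, card_eq_sum_card_fiberwise (f := fun p => p.1 - p.2)
    fun p hp => sub_mem_sub (mem_product.1 hp).1 (mem_product.1 hp).2]
  exact sum_congr rfl fun d _ => (card_sub_eq s s d).symm

lemma addEnergy_eq_card_filter_sub (s t : Finset G) :
    addEnergy s t = #{x ∈ (s ×ˢ s) ×ˢ (t ×ˢ t) | x.1.1 - x.1.2 = x.2.1 - x.2.2} :=
  card_equiv ((Equiv.refl _).prodCongr (.prodComm _ _))
    (by simp [sub_eq_sub_iff_add_eq_add, add_comm, and_comm])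

lemma addEnergy_eq_sum_addConvolution_mul (s t : Finset G) :
    addEnergy s t = ∑ d ∈ s - s, s.addConvolution (-s) d * t.addConvolution (-t) d := by
  rw [addEnergy_eq_card_filter_sub, card_eq_sum_card_fiberwise (f := fun x => x.1.1 - x.1.2)
    fun x hx => by simp only [coe_filter, mem_product] at hx; exact sub_mem_sub hx.1.1.1 hx.1.1.2]
  refine sum_congr rfl fun d _ => ?_
  rw [← card_sub_eq, ← card_sub_eq, ← card_product, filter_filter]
  congr 1
  ext x
  simp only [mem_filter, mem_product]
  grind

/-- Katz–Koester: `(A ∩ (y + A)) + B ⊆ (A + B) ∩ (y + (A + B))`. -/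
lemma card_inter_vadd_add_le (A B : Finset G) (y : G) :
    #(A ∩ (y +ᵥ A) + B) ≤ (A + B).addConvolution (-(A + B)) y := by
  rw [← card_inter_vadd, ← vadd_add_assoc]
  exact card_le_card inter_add_subset

lemma addEnergy_pow_mul_card_le (s t : Finset G) {k : ℕ} (hk : k ≠ 0) :
    addEnergy s t ^ k * #s ≤ #s ^ (2 * k) * higherAddEnergy k t := by
  obtain ⟨n, rfl⟩ := Nat.exists_eq_add_one_of_ne_zero hk
  have hJensen := inner_pow_le_weight_pow_mul_Lp (s - s)
    (w := fun d => (s.addConvolution (-s) d : ℝ)) (f := fun d => (t.addConvolution (-t) d : ℝ))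
    (fun _ _ => Nat.cast_nonneg _) (fun _ _ => Nat.cast_nonneg _) n
  simp only [← Nat.cast_sum, ← Nat.cast_mul, ← Nat.cast_pow, sum_addConvolution_neg_self,
    ← addEnergy_eq_sum_addConvolution_mul, Nat.cast_le] at hJensen
  have hsum : ∑ d ∈ s - s, s.addConvolution (-s) d * t.addConvolution (-t) d ^ (n + 1)
      ≤ #s * higherAddEnergy (n + 1) t := calc
    _ ≤ ∑ d ∈ s - s, #s * t.addConvolution (-t) d ^ (n + 1) := by
      gcongr; exact addConvolution_le_card_left
    _ ≤ #s * higherAddEnergy (n + 1) t := by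
      rw [← mul_sum, higherAddEnergy]
      refine Nat.mul_le_mul_left _ (sum_le_sum_of_ne_zero fun d _ hd => ?_)
      rw [sub_eq_add_neg, ← addConvolution_ne_zero]
      exact fun h => hd (by rw [h, zero_pow n.succ_ne_zero])
  calc addEnergy s t ^ (n + 1) * #s ≤ (#s ^ 2) ^ n * (#s * higherAddEnergy (n + 1) t) * #s := by
        gcongr; exact hJensen.trans (Nat.mul_le_mul_left _ hsum)
    _ = #s ^ (2 * (n + 1)) * higherAddEnergy (n + 1) t := by ring

lemma addConvolution_mul_card_pow_le (A B : Finset G) (y : G) {k : ℕ} (hk : k ≠ 0) :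
    A.addConvolution (-A) y * #B ^ (2 * k) ≤
      higherAddEnergy k B * (A + B).addConvolution (-(A + B)) y ^ k := by
  set X := A ∩ (y +ᵥ A)
  rw [← card_inter_vadd]
  obtain hX | hX := (#X).eq_zero_or_pos
  · rw [hX, zero_mul]; exact Nat.zero_le _
  refine Nat.le_of_mul_le_mul_left ?_ (pow_pos hX (2 * k))
  calc #X ^ (2 * k) * (#X * #B ^ (2 * k)) = (#X ^ 2 * #B ^ 2) ^ k * #X := by ring
    _ ≤ ((A + B).addConvolution (-(A + B)) y * addEnergy X B) ^ k * #X := by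
      gcongr ?_ ^ k * _
      exact (le_card_add_mul_addEnergy X B).trans
        (Nat.mul_le_mul_right _ (card_inter_vadd_add_le A B y))
    _ = (A + B).addConvolution (-(A + B)) y ^ k * (addEnergy X B ^ k * #X) := by ring
    _ ≤ (A + B).addConvolution (-(A + B)) y ^ k * (#X ^ (2 * k) * higherAddEnergy k B) := by
      gcongr _ * ?_; exact addEnergy_pow_mul_card_le X B hk
    _ = #X ^ (2 * k) * (higherAddEnergy k B * (A + B).addConvolution (-(A + B)) y ^ k) := by
      ring

lemma card_pow_mul_card_pow_le (A B : Finset G) {k : ℕ} (hk : k ≠ 0) :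
    #A ^ (2 * k + 2) * #B ^ (2 * k) ≤
      #(A - A) * higherAddEnergy k B * addEnergy A (A + B) ^ k := by
  have hHolder := mul_pow_sum_le_card_mul_pow_sum (s := A - A) (n := k)
    (u := fun y => (A.addConvolution (-A) y : ℝ))
    (a := fun y => (A.addConvolution (-A) y * (A + B).addConvolution (-(A + B)) y : ℕ))
    (c := (#B ^ (2 * k) : ℕ)) (C := (higherAddEnergy k B : ℝ)) hk (Nat.cast_nonneg _)
    (Nat.cast_nonneg _) (fun _ _ => Nat.cast_nonneg _) (fun _ _ => Nat.cast_nonneg _)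
    fun y _ => by
      have := addConvolution_mul_card_pow_le A B y hk
      exact_mod_cast calc
        #B ^ (2 * k) * A.addConvolution (-A) y ^ (k + 1)
            = A.addConvolution (-A) y ^ k * (A.addConvolution (-A) y * #B ^ (2 * k)) := by ring
        _ ≤ A.addConvolution (-A) y ^ k *
              (higherAddEnergy k B * (A + B).addConvolution (-(A + B)) y ^ k) := by gcongr
        _ = higherAddEnergy k B *
              (A.addConvolution (-A) y * (A + B).addConvolution (-(A + B)) y) ^ k := by ring
  simp only [← Nat.cast_sum, ← Nat.cast_pow, ← Nat.cast_mul, Nat.cast_le,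
    sum_addConvolution_neg_self, ← addEnergy_eq_sum_addConvolution_mul] at hHolder
  calc #A ^ (2 * k + 2) * #B ^ (2 * k) = #B ^ (2 * k) * (#A ^ 2) ^ (k + 1) := by ring
    _ ≤ _ := hHolder

lemma natCard_tuples_eq_higherAddEnergy (B : Finset G) {k : ℕ} (hk : k ≠ 0) :
    Nat.card {p : (Fin k → G) × (Fin k → G) //
        (∀ i, p.1 i ∈ B) ∧ (∀ i, p.2 i ∈ B) ∧ ∀ i j, p.1 i - p.2 i = p.1 j - p.2 j} =
      higherAddEnergy k B := by
  set T := (Fintype.piFinset fun _ : Fin k => B ×ˢ B).filter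
    fun f => ∀ i j, (f i).1 - (f i).2 = (f j).1 - (f j).2
  have i₀ : Fin k := ⟨0, Nat.pos_of_ne_zero hk⟩
  calc _ = Nat.card T := Nat.card_congr <|
        ((Equiv.arrowProdEquivProdArrow _ _ _).symm.subtypeEquiv fun p => by
          simp [T, Fintype.mem_piFinset, forall_and, and_assoc])
    _ = ∑ d ∈ B - B, #(Fintype.piFinset fun _ : Fin k => {p ∈ B ×ˢ B | p.1 - p.2 = d}) := by
      rw [Nat.card_eq_finsetCard, card_eq_sum_card_fiberwise (f := fun f => (f i₀).1 - (f i₀).2)]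
      · refine sum_congr rfl fun d _ => congrArg card ?_
        ext f
        simp only [T, mem_filter, Fintype.mem_piFinset]
        constructor
        · rintro ⟨⟨hB, hf⟩, rfl⟩ i; exact ⟨hB i, hf i i₀⟩
        · intro h; exact ⟨⟨fun i => (h i).1, fun i j => (h i).2.trans (h j).2.symm⟩, (h i₀).2⟩
      · intro f hf
        simp only [T, coe_filter, Fintype.mem_piFinset, mem_product] at hf
        exact sub_mem_sub (hf.1 i₀).1 (hf.1 i₀).2
    _ = higherAddEnergy k B := by
      simp only [Fintype.card_piFinset_const, card_sub_eq, higherAddEnergy]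

lemma natCard_quadruples_eq_addEnergy (A S : Finset G) :
    Nat.card {q : (G × G) × G × G //
        q.1.1 ∈ A ∧ q.1.2 ∈ A ∧ q.2.1 ∈ S ∧ q.2.2 ∈ S ∧ q.1.1 - q.2.1 = q.1.2 - q.2.2} =
      addEnergy A S := by
  rw [addEnergy_eq_card_filter_sub, ← Nat.card_eq_finsetCard]
  exact Nat.card_congr <| Equiv.subtypeEquivRight fun q => by
    simp [sub_eq_sub_iff_sub_eq_sub, and_assoc]

end Finset

theorem energy_lower_bound_general {G : Type*} [AddCommGroup G] [DecidableEq G]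
    (A B : Finset G) (k : ℕ) (hk : 2 ≤ k) (K : ℝ)
    (hK : ((A - A).card : ℝ) = K * A.card) :
    (Nat.card {p : (Fin k → G) × (Fin k → G) //
        (∀ i, p.1 i ∈ B) ∧ (∀ i, p.2 i ∈ B) ∧
        ∀ i j, p.1 i - p.2 i = p.1 j - p.2 j} : ℝ) *
      (Nat.card {q : (G × G) × G × G //
        q.1.1 ∈ A ∧ q.1.2 ∈ A ∧ q.2.1 ∈ A + B ∧ q.2.2 ∈ A + B ∧
        q.1.1 - q.2.1 = q.1.2 - q.2.2} : ℝ) ^ k ≥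
      (A.card : ℝ) ^ (2 * k + 1) * (B.card : ℝ) ^ (2 * k) / K := by
  have hk₀ : k ≠ 0 := by omega
  rw [natCard_tuples_eq_higherAddEnergy B hk₀, natCard_quadruples_eq_addEnergy, ge_iff_le]
  obtain rfl | hA := A.eq_empty_or_nonempty
  · rw [card_empty, Nat.cast_zero, zero_pow (by omega), zero_mul, zero_div]
    positivity
  have hApos : (0 : ℝ) < #A := by exact_mod_cast hA.card_pos
  have hKpos : 0 < K := by
    have hD : (0 : ℝ) < #(A - A) := by exact_mod_cast (hA.sub hA).card_pos
    rw [hK] at hD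
    exact pos_of_mul_pos_left hD hApos.le
  have key : ((#A ^ (2 * k + 2) * #B ^ (2 * k) : ℕ) : ℝ) ≤
      (#(A - A) * higherAddEnergy k B * addEnergy A (A + B) ^ k : ℕ) :=
    Nat.cast_le.2 (card_pow_mul_card_pow_le A B hk₀)
  push_cast [hK] at key
  rw [div_le_iff₀ hKpos]
  refine le_of_mul_le_mul_right ?_ hApos
  linear_combination key

/-- `E_k(B) · E(A, A+B)^k ≥ |A|^{2k+1} |B|^{2k} / K` where `|A - A| = K|A|`. -/
theorem energy_lower_bound {G : Type*} [AddCommGroup G] [Fintype G] [DecidableEq G]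
    (A B : Finset G) (hA : A.Nonempty) (k : ℕ) (hk : 2 ≤ k) (K : ℝ)
    (hK : ((A - A).card : ℝ) = K * A.card) :
    (Nat.card {p : (Fin k → G) × (Fin k → G) //
        (∀ i, p.1 i ∈ B) ∧ (∀ i, p.2 i ∈ B) ∧
        ∀ i j, p.1 i - p.2 i = p.1 j - p.2 j} : ℝ) *
      (Nat.card {q : (G × G) × G × G //
        q.1.1 ∈ A ∧ q.1.2 ∈ A ∧ q.2.1 ∈ A + B ∧ q.2.2 ∈ A + B ∧
        q.1.1 - q.2.1 = q.1.2 - q.2.2} : ℝ) ^ k ≥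
      (A.card : ℝ) ^ (2 * k + 1) * (B.card : ℝ) ^ (2 * k) / K :=
  energy_lower_bound_general A B k hk K hK
end

section
/- Density-decomposition step: let G = 𝔽₂ⁿ, A ⊆ G, L ≤ G a subspace, M ≥ 1, and suppose Σ_x (A∘A)(x)·L(x) ≥ |L||A|/(8M). Writing A = ⊔_{λ ∈ G/L} A_λ with A_λ = A ∩ (L+λ) and Λ := {λ : |A_λ| ≥ |L|/(16M)}, the set A* := A ∩ (Λ + L) satisfies |A*| ≥ |A|/(16M) and |Λ|·|L| ≤ 16M|A|. -/
/-!
Counting pairs, `∑_{x ∈ L} |A ∩ (A + x)| = ∑_{a ∈ A} |A ∩ (a + L)|`: every element of `A` is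
weighted by the size of its coset piece. Elements in light pieces (fewer than `|L|/(16M)` points)
contribute at most `|A||L|/(16M)`, half of the assumed total, and every other element contributes
at most `|L|`, so at least `|A|/(16M)` elements lie in heavy pieces. Every point of `A* + L` lies
in a heavy coset, hence `|L| |A* + L| ≤ 16M ∑_y |A ∩ (y + L)| = 16M |A| |L|`.
-/

open Finset Pointwise

namespace Finset

lemma sum_le_card_filter_mul_add {ι : Type*} (s : Finset ι) {f : ι → ℝ} {N c : ℝ} (hc : 0 < c)
    (hN : 0 ≤ N) (hf : ∀ i ∈ s, f i ≤ N) :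
    ∑ i ∈ s, f i ≤ #(s.filter fun i => N ≤ c * f i) * N + #s * N / c := by
  rw [← sum_filter_add_sum_filter_not s fun i => N ≤ c * f i]
  gcongr
  · exact (sum_le_card_nsmul _ f N fun i hi => hf i (mem_filter.1 hi).1).trans_eq
      (nsmul_eq_mul _ _)
  · calc ∑ i ∈ s with ¬N ≤ c * f i, f i ≤ #{i ∈ s | ¬N ≤ c * f i} * (N / c) :=
          (sum_le_card_nsmul _ f _ fun i hi => by
            rw [le_div_iff₀' hc]
            exact (not_le.1 (mem_filter.1 hi).2).le).trans_eq (nsmul_eq_mul _ _)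
      _ ≤ #s * (N / c) := by gcongr; exact filter_subset _ _
      _ = #s * N / c := by ring

end Finset

namespace DensityDecomposition

variable {G : Type*} [AddCommGroup G] [Fintype G] {A : Finset G} {L : AddSubgroup G}
  [DecidablePred (· ∈ L)]

/-- `|A ∩ (a + L)|`, the paper's `|A_λ|` for the coset `λ` of `a`. -/
def cosetCard (A : Finset G) (L : AddSubgroup G) [DecidablePred (· ∈ L)] (a : G) : ℕ :=
  #{b ∈ A | b - a ∈ L}

/-- The paper's `A* = A ∩ (Λ + L)` for the threshold `|L|/c`. -/
noncomputable def heavy (A : Finset G) (L : AddSubgroup G) [DecidablePred (· ∈ L)] (c : ℝ) :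
    Finset G :=
  {a ∈ A | (#{x | x ∈ L} : ℝ) ≤ c * cosetCard A L a}

variable (L) in
lemma card_filter_mem_pos : 0 < #{x | x ∈ L} := card_pos.2 ⟨0, by simp⟩

omit [Fintype G] in
lemma cosetCard_add_of_mem {a l : G} (hl : l ∈ L) :
    cosetCard A L (a + l) = cosetCard A L a := by
  refine congrArg card (filter_congr fun b _ => ?_)
  rw [← sub_sub, sub_eq_add_neg, L.add_mem_cancel_right (neg_mem hl)]

lemma cosetCard_le (a : G) : cosetCard A L a ≤ #{x | x ∈ L} :=
  card_le_card_of_injOn (· - a) (fun b hb => by simp_all) fun _ _ _ _ h => sub_left_injective h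

lemma sum_cosetCard : ∑ a, cosetCard A L a = #A * #{x | x ∈ L} := by
  calc ∑ a, cosetCard A L a = ∑ b ∈ A, #{a | b - a ∈ L} := by
        simp only [cosetCard, card_filter]
        exact sum_comm
    _ = ∑ _b ∈ A, #{x | x ∈ L} :=
        sum_congr rfl fun b _ => card_equiv (Equiv.subLeft b) fun a => by simp
    _ = #A * #{x | x ∈ L} := by rw [sum_const, smul_eq_mul]

omit [Fintype G] in
lemma card_inter_add_singleton [DecidableEq G] (x : G) :
    #(A ∩ (A + {x})) = #{y ∈ A | y - x ∈ A} := by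
  congr 1
  ext y
  simp only [mem_inter, mem_filter, mem_add, mem_singleton, exists_eq_left, ← eq_sub_iff_add_eq,
    exists_eq_right]

lemma sum_card_inter_add_singleton [DecidableEq G] :
    ∑ x ∈ {x | x ∈ L}, #(A ∩ (A + {x})) = ∑ a ∈ A, cosetCard A L a := by
  calc ∑ x ∈ {x | x ∈ L}, #(A ∩ (A + {x}))
      = ∑ x ∈ {x | x ∈ L}, #{y ∈ A | y - x ∈ A} := by simp_rw [card_inter_add_singleton]
    _ = ∑ y ∈ A, #{x ∈ {x | x ∈ L} | y - x ∈ A} :=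
        sum_card_bipartiteAbove_eq_sum_card_bipartiteBelow fun x y => y - x ∈ A
    _ = ∑ a ∈ A, cosetCard A L a :=
        sum_congr rfl fun y _ => card_equiv (Equiv.subLeft y) fun x => by simp [and_comm]

lemma card_div_le_card_heavy {M : ℝ} (hM : 0 < M)
    (h : #{x | x ∈ L} * #A / (8 * M) ≤ ∑ a ∈ A, (cosetCard A L a : ℝ)) :
    #A / (16 * M) ≤ #(heavy A L (16 * M)) := by
  have hL : (0 : ℝ) < #{x | x ∈ L} := by exact_mod_cast card_filter_mem_pos L
  have hsplit : ∑ a ∈ A, (cosetCard A L a : ℝ)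
      ≤ #(heavy A L (16 * M)) * #{x | x ∈ L} + #A * #{x | x ∈ L} / (16 * M) :=
    sum_le_card_filter_mul_add A (by positivity) hL.le fun a _ => by
      exact_mod_cast cosetCard_le a
  have key : (#{x | x ∈ L} : ℝ) * (#A / (16 * M)) ≤ #{x | x ∈ L} * #(heavy A L (16 * M)) := by
    have h₁ : (#{x | x ∈ L} : ℝ) * #A / (8 * M) = 2 * (#{x | x ∈ L} * (#A / (16 * M))) := by
      field_simp; ring
    have h₂ : (#A : ℝ) * #{x | x ∈ L} / (16 * M) = #{x | x ∈ L} * (#A / (16 * M)) := by ring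
    linarith
  exact le_of_mul_le_mul_left key hL

lemma card_heavy_add_le [DecidableEq G] {c : ℝ} (hc : 0 < c) :
    #(heavy A L c + ({x | x ∈ L} : Finset G)) ≤ c * #A := by
  set T := heavy A L c + ({x | x ∈ L} : Finset G)
  have hT : ∀ y ∈ T, (#{x | x ∈ L} : ℝ) ≤ c * cosetCard A L y := by
    intro y hy
    obtain ⟨a, ha, l, hl, rfl⟩ := mem_add.1 hy
    rw [cosetCard_add_of_mem (by simpa using hl)]
    exact (mem_filter.1 ha).2
  have key : (#T : ℝ) * #{x | x ∈ L} ≤ c * #A * #{x | x ∈ L} := by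
    calc (#T : ℝ) * #{x | x ∈ L} ≤ ∑ y ∈ T, c * cosetCard A L y := by
          rw [← nsmul_eq_mul]; exact card_nsmul_le_sum _ _ _ hT
      _ ≤ ∑ y, c * cosetCard A L y :=
          sum_le_sum_of_subset_of_nonneg (subset_univ _) fun _ _ _ => by positivity
      _ = c * #A * #{x | x ∈ L} := by
          rw [← mul_sum, mul_assoc, ← Nat.cast_sum, sum_cosetCard, Nat.cast_mul]
  exact le_of_mul_le_mul_right key (by exact_mod_cast card_filter_mem_pos L)

end DensityDecomposition

open DensityDecomposition in
/-- Density decomposition: if `∑_x (A∘A)(x)L(x) ≥ |L||A|/(8M)`, then the union `A*` of the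
pieces of `A` in cosets `L+λ` with `|A ∩ (L+λ)| ≥ |L|/(16M)` satisfies `|A*| ≥ |A|/(16M)`,
and these heavy cosets cover at most `16M|A|` elements (i.e. `|Λ||L| ≤ 16M|A|`). -/
theorem density_decomposition {n : ℕ} (A : Finset (Fin n → ZMod 2))
    (L : AddSubgroup (Fin n → ZMod 2)) [DecidablePred (· ∈ L)]
    (M : ℝ) (hM : 1 ≤ M)
    (Lf : Finset (Fin n → ZMod 2)) (hLf : Lf = Finset.univ.filter (· ∈ L))
    (h : (∑ x : Fin n → ZMod 2,
        ((A ∩ (A + ({x} : Finset (Fin n → ZMod 2)))).card : ℝ) *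
          (if x ∈ L then 1 else 0)) ≥ (Lf.card : ℝ) * A.card / (8 * M)) :
    ((A.filter fun a =>
        (Lf.card : ℝ) ≤ 16 * M * (A.filter fun b => b - a ∈ L).card).card : ℝ) ≥
      (A.card : ℝ) / (16 * M) ∧
    (((A.filter fun a =>
        (Lf.card : ℝ) ≤ 16 * M * (A.filter fun b => b - a ∈ L).card) + Lf).card : ℝ) ≤
      16 * M * A.card := by
  subst hLf
  have hM₀ : 0 < M := by linarith
  have hsum : ∑ x, (#(A ∩ (A + {x})) : ℝ) * (if x ∈ L then 1 else 0)
      = ∑ a ∈ A, (cosetCard A L a : ℝ) := by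
    simp only [mul_ite, mul_one, mul_zero, ← sum_filter]
    exact_mod_cast sum_card_inter_add_singleton
  rw [hsum] at h
  exact ⟨card_div_le_card_heavy hM₀ h, card_heavy_add_le (by positivity)⟩
end

section
/- If B' ⊆ B'' are two finite subsets of an abelian group G with |B''| ≤ (1+ε/4)|B'|, z ∈ G, and A ⊆ G satisfies |A ∩ (B'+z)| + |A ∩ (B''+z)| ≥ (1/2 + ε/8)(|B'| + |B''|), then for every x such that B' + x ⊆ B'' one has (A∘A)(x) ≥ (ε/8)|B'| > 0; in particular any such x lies in A−A. -/
open Finset Pointwise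

/-- Nested-sets correlation step: under the stated density hypotheses on `A` in `B'+z` and
`B''+z`, any `x` with `B' + x ⊆ B''` satisfies `(A∘A)(x) ≥ (ε/8)|B'| > 0`, so `x ∈ A−A`. -/
theorem nested_correlation {G : Type*} [AddCommGroup G] [Fintype G] [DecidableEq G]
    (A B' B'' : Finset G) (hB' : B'.Nonempty) (hsub : B' ⊆ B'') (ε : ℝ)
    (hε : 0 < ε) (hε1 : ε < 1)
    (hcard : (B''.card : ℝ) ≤ (1 + ε / 4) * B'.card)
    (z x : G) (hx : ∀ b ∈ B', b + x ∈ B'')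
    (h : ((A ∩ (B' + ({z} : Finset G))).card : ℝ) +
          ((A ∩ (B'' + ({z} : Finset G))).card : ℝ) ≥
        (1 / 2 + ε / 8) * ((B'.card : ℝ) + B''.card)) :
    (ε / 8) * B'.card ≤ ((A ∩ (A + ({x} : Finset G))).card : ℝ) ∧
    0 < (ε / 8) * (B'.card : ℝ) ∧ x ∈ A - A := by
  set S := A ∩ (B' + ({z} : Finset G)) with hS
  set T := A ∩ (B'' + ({z} : Finset G)) with hT
  have hmemadd : ∀ (C : Finset G) (c g : G), g ∈ C + ({c} : Finset G) ↔ ∃ b ∈ C, b + c = g := by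
    intro C c g
    simp [Finset.mem_add]
  -- S + {x} ⊆ B'' + {z}
  have hSsub : S + ({x} : Finset G) ⊆ B'' + ({z} : Finset G) := by
    intro g hg
    rw [hmemadd] at hg
    obtain ⟨s, hs, rfl⟩ := hg
    have hs' : s ∈ B' + ({z} : Finset G) := (Finset.mem_inter.1 hs).2
    rw [hmemadd] at hs'
    obtain ⟨b, hb, rfl⟩ := hs'
    rw [hmemadd]
    exact ⟨b + x, hx b hb, by abel⟩
  have hTsub : T ⊆ B'' + ({z} : Finset G) := fun g hg => (Finset.mem_inter.1 hg).2
  -- union subset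
  have hU : (S + ({x} : Finset G)) ∪ T ⊆ B'' + ({z} : Finset G) :=
    Finset.union_subset hSsub hTsub
  -- cardinalities of translates
  have hcardadd : ∀ (C : Finset G) (c : G), (C + ({c} : Finset G)).card = C.card := by
    intro C c
    rw [Finset.add_singleton]
    exact Finset.card_image_of_injective _ (add_left_injective c)
  -- inclusion exclusion
  have hIE : S.card + T.card ≤ ((S + ({x} : Finset G)) ∩ T).card + B''.card := by
    have := Finset.card_union_add_card_inter (S + ({x} : Finset G)) T
    have hle : ((S + ({x} : Finset G)) ∪ T).card ≤ B''.card := by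
      calc ((S + ({x} : Finset G)) ∪ T).card ≤ (B'' + ({z} : Finset G)).card :=
            Finset.card_le_card hU
        _ = B''.card := hcardadd _ _
    rw [hcardadd S x] at this
    omega
  -- intersection subset of A ∩ (A + {x})
  have hInt : (S + ({x} : Finset G)) ∩ T ⊆ A ∩ (A + ({x} : Finset G)) := by
    intro g hg
    obtain ⟨hg1, hg2⟩ := Finset.mem_inter.1 hg
    rw [hmemadd] at hg1
    obtain ⟨s, hs, rfl⟩ := hg1
    refine Finset.mem_inter.2 ⟨(Finset.mem_inter.1 hg2).1, ?_⟩
    rw [hmemadd]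
    exact ⟨s, (Finset.mem_inter.1 hs).1, rfl⟩
  have hkey : (S.card : ℝ) + T.card - B''.card ≤ ((A ∩ (A + ({x} : Finset G))).card : ℝ) := by
    have h1 : (((S + ({x} : Finset G)) ∩ T).card : ℝ) ≤ (A ∩ (A + ({x} : Finset G))).card := by
      exact_mod_cast Finset.card_le_card hInt
    have h2 : (S.card : ℝ) + T.card ≤ (((S + ({x} : Finset G)) ∩ T).card : ℝ) + B''.card := by
      exact_mod_cast hIE
    linarith
  have hBpos : (0 : ℝ) < B'.card := by exact_mod_cast Finset.card_pos.2 hB'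
  have hmain : (ε / 8) * B'.card ≤ ((A ∩ (A + ({x} : Finset G))).card : ℝ) := by
    have hB'' : (B''.card : ℝ) ≤ (1 + ε / 4) * B'.card := hcard
    nlinarith [h, hkey, hBpos, mul_pos hε hBpos]
  have hpos : 0 < (ε / 8) * (B'.card : ℝ) := by positivity
  refine ⟨hmain, hpos, ?_⟩
  have hne : (A ∩ (A + ({x} : Finset G))).Nonempty := by
    rw [← Finset.card_pos]
    by_contra hc
    push_neg at hc
    interval_cases h' : (A ∩ (A + ({x} : Finset G))).card
    · simp at hmain; linarith
  obtain ⟨g, hg⟩ := hne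
  obtain ⟨hg1, hg2⟩ := Finset.mem_inter.1 hg
  rw [hmemadd] at hg2
  obtain ⟨a, ha, rfl⟩ := hg2
  rw [Finset.mem_sub]
  exact ⟨a + x, hg1, a, ha, by abel⟩
end
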